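/- Let f ∈ L^1([-π,π]) be quaternion-valued with Fourier coefficients t_s = (1/2π)∫ f(x) exp(−i s x) dx for s ≥ 0 and suppose additionally conj(t_s) = (1/2π)∫ f(x) exp(i s x) dx for all s ≥ 0 (the Hermitian generating condition). Then the complex component φ1(f)(x) is real-valued for almost every x ∈ [-π,π]. -/

import Mathlib

open MeasureTheory Real

/-- exp(i x) = cos x + i sin x inside the quaternions (with i the first imaginary unit). -/
noncomputable def eq (t : ℝ) : Quaternion ℝ := ⟨Real.cos t, Real.sin t, 0, 0⟩

/-- First complex component: φ1(a) = a₀ + a₁ i. -/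
def phi1 (a : Quaternion ℝ) : ℂ := ⟨a.re, a.imI⟩

lemma fourier_unique (b : ℝ → ℝ) (hb : IntervalIntegrable b volume (-π) π)
    (hcos : ∀ s : ℕ, (∫ x in (-π)..π, b x * Real.cos (s * x)) = 0)
    (hsin : ∀ s : ℕ, (∫ x in (-π)..π, b x * Real.sin (s * x)) = 0) :
    ∀ᵐ x ∂(volume.restrict (Set.Icc (-π) π)), b x = 0 := by
  haveI : Fact (0 < 2 * π) := ⟨by positivity⟩
  have hpi : (-π : ℝ) ≤ π := by linarith [Real.pi_pos]
  -- integer versions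
  have hcosZ : ∀ n : ℤ, (∫ x in (-π)..π, b x * Real.cos (n * x)) = 0 := by
    intro n
    rcases n.eq_nat_or_neg with ⟨m, hm | hm⟩ <;> subst hm
    · exact_mod_cast hcos m
    · simp only [Int.cast_neg, Int.cast_natCast, neg_mul, Real.cos_neg]
      exact hcos m
  have hsinZ : ∀ n : ℤ, (∫ x in (-π)..π, b x * Real.sin (n * x)) = 0 := by
    intro n
    rcases n.eq_nat_or_neg with ⟨m, hm | hm⟩ <;> subst hm
    · exact_mod_cast hsin m
    · simp only [Int.cast_neg, Int.cast_natCast, neg_mul, Real.sin_neg, mul_neg]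
      rw [intervalIntegral.integral_neg, neg_eq_zero]
      exact hsin m
  -- complex exponential version
  have hbC : IntervalIntegrable (fun x => (b x : ℂ)) volume (-π) π :=
    ⟨Complex.ofRealCLM.integrable_comp hb.1, Complex.ofRealCLM.integrable_comp hb.2⟩
  have hZ : ∀ n : ℤ, (∫ x in (-π)..π, (b x : ℂ) * Complex.exp ((n : ℂ) * x * Complex.I)) = 0 := by
    intro n
    have h1 : ∀ x : ℝ, (b x : ℂ) * Complex.exp ((n : ℂ) * x * Complex.I)
        = ((b x * Real.cos (n * x) : ℝ) : ℂ) + ((b x * Real.sin (n * x) : ℝ) : ℂ) * Complex.I := by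
      intro x
      rw [show ((n : ℂ) * x * Complex.I) = (((n : ℝ) * x : ℝ) : ℂ) * Complex.I by push_cast; ring,
        Complex.exp_mul_I, ← Complex.ofReal_cos, ← Complex.ofReal_sin]
      push_cast
      ring
    rw [intervalIntegral.integral_congr (fun x _ => h1 x)]
    have hic : IntervalIntegrable (fun x => ((b x * Real.cos (n * x) : ℝ) : ℂ)) volume (-π) π :=
      ⟨Complex.ofRealCLM.integrable_comp (hb.mul_continuousOn
        (Real.continuous_cos.comp (continuous_const.mul continuous_id)).continuousOn).1,
       Complex.ofRealCLM.integrable_comp (hb.mul_continuousOn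
        (Real.continuous_cos.comp (continuous_const.mul continuous_id)).continuousOn).2⟩
    have his0 : IntervalIntegrable (fun x => ((b x * Real.sin (n * x) : ℝ) : ℂ)) volume (-π) π :=
      ⟨Complex.ofRealCLM.integrable_comp (hb.mul_continuousOn
        (Real.continuous_sin.comp (continuous_const.mul continuous_id)).continuousOn).1,
       Complex.ofRealCLM.integrable_comp (hb.mul_continuousOn
        (Real.continuous_sin.comp (continuous_const.mul continuous_id)).continuousOn).2⟩
    have his : IntervalIntegrable (fun x => ((b x * Real.sin (n * x) : ℝ) : ℂ) * Complex.I) volume (-π) π :=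
      his0.mul_const _
    rw [intervalIntegral.integral_add hic his, intervalIntegral.integral_mul_const,
      intervalIntegral.integral_ofReal, intervalIntegral.integral_ofReal, hcosZ n, hsinZ n]
    simp
  -- test against continuous functions on the circle
  have hint : ∀ g : C(AddCircle (2 * π), ℂ),
      IntervalIntegrable (fun x => (b x : ℂ) * g (x : AddCircle (2 * π))) volume (-π) π := by
    intro g
    exact hbC.mul_continuousOn (g.continuous.comp (AddCircle.continuous_mk' _)).continuousOn
  have habs : IntervalIntegrable (fun x => |b x|) volume (-π) π := hb.norm
  set C : ℝ := ∫ x in (-π)..π, |b x| with hC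
  have hG : ∀ g : C(AddCircle (2 * π), ℂ),
      (∫ x in (-π)..π, (b x : ℂ) * g (x : AddCircle (2 * π))) = 0 := by
    set Φlin : C(AddCircle (2 * π), ℂ) →ₗ[ℂ] ℂ :=
      { toFun := fun g => ∫ x in (-π)..π, (b x : ℂ) * g (x : AddCircle (2 * π))
        map_add' := fun g h => by
          simp only [ContinuousMap.add_apply, mul_add]
          exact intervalIntegral.integral_add (hint g) (hint h)
        map_smul' := fun c g => by
          simp only [ContinuousMap.smul_apply, smul_eq_mul, RingHom.id_apply]
          rw [show (∫ x in (-π)..π, (b x : ℂ) * (c * g (x : AddCircle (2 * π))))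
              = ∫ x in (-π)..π, c * ((b x : ℂ) * g (x : AddCircle (2 * π))) by
            apply intervalIntegral.integral_congr; intro x _; ring]
          exact intervalIntegral.integral_const_mul _ _ } with hΦlin
    set Φ : C(AddCircle (2 * π), ℂ) →L[ℂ] ℂ :=
      LinearMap.mkContinuous Φlin C (by
        intro g
        have h1 : ‖∫ x in (-π)..π, (b x : ℂ) * g (x : AddCircle (2 * π))‖
            ≤ ∫ x in (-π)..π, ‖(b x : ℂ) * g (x : AddCircle (2 * π))‖ :=
          intervalIntegral.norm_integral_le_integral_norm hpi
        have h2 : (∫ x in (-π)..π, ‖(b x : ℂ) * g (x : AddCircle (2 * π))‖)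
            ≤ ∫ x in (-π)..π, |b x| * ‖g‖ := by
          apply intervalIntegral.integral_mono_on hpi ((hint g).norm) (habs.mul_const _)
          intro x _
          rw [norm_mul, Complex.norm_real, Real.norm_eq_abs]
          exact mul_le_mul_of_nonneg_left (g.norm_coe_le_norm _) (abs_nonneg _)
        calc ‖Φlin g‖ ≤ ∫ x in (-π)..π, |b x| * ‖g‖ := le_trans h1 h2
          _ = C * ‖g‖ := by rw [intervalIntegral.integral_mul_const]) with hΦ
    have hker : Submodule.span ℂ (Set.range (@fourier (2 * π))) ≤ LinearMap.ker (Φ : C(AddCircle (2 * π), ℂ) →ₗ[ℂ] ℂ) := by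
      rw [Submodule.span_le]
      rintro _ ⟨n, rfl⟩
      have : Φ (fourier n) = ∫ x in (-π)..π, (b x : ℂ) * Complex.exp ((n : ℂ) * x * Complex.I) := by
        apply intervalIntegral.integral_congr
        intro x _
        show (b x : ℂ) * (fourier n) (x : AddCircle (2 * π)) = (b x : ℂ) * Complex.exp ((n : ℂ) * x * Complex.I)
        congr 1
        rw [fourier_coe_apply]
        congr 1
        have hpi0 : (π : ℂ) ≠ 0 := by exact_mod_cast Real.pi_ne_zero
        field_simp
        push_cast
        ring
      simp only [SetLike.mem_coe, LinearMap.mem_ker, ContinuousLinearMap.coe_coe]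
      rw [this]
      exact hZ n
    have htop : (Submodule.span ℂ (Set.range (@fourier (2 * π)))).topologicalClosure
        ≤ LinearMap.ker (Φ : C(AddCircle (2 * π), ℂ) →ₗ[ℂ] ℂ) :=
      Submodule.topologicalClosure_minimal _ hker (ContinuousLinearMap.isClosed_ker Φ)
    rw [span_fourier_closure_eq_top] at htop
    intro g
    have : Φ g = 0 := htop (Submodule.mem_top) 
    exact this
  -- conclude via smooth test functions
  have hIoo : ∀ᵐ x ∂(volume.restrict (Set.Icc (-π) π)), x ∈ Set.Ioo (-π) π → b x = 0 := by
    apply isOpen_Ioo.ae_eq_zero_of_integral_contDiff_smul_eq_zero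
    · have h1 : IntegrableOn b (Set.Icc (-π) π) volume := by
        rw [integrableOn_Icc_iff_integrableOn_Ioc]
        exact (intervalIntegrable_iff_integrableOn_Ioc_of_le hpi).mp hb
      exact h1.locallyIntegrable.locallyIntegrableOn _
    · intro g hg hgsupp hgsub
      have hga : ∀ y, y ∉ Set.Ioo (-π) π → g y = 0 := fun y hy =>
        image_eq_zero_of_notMem_tsupport (fun hmem => hy (hgsub hmem))
      have hgc : Continuous fun x : ℝ => (g x : ℂ) := Complex.continuous_ofReal.comp hg.continuous
      have hpi2 : -π + 2 * π = π := by ring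
      have hbd : (fun x : ℝ => (g x : ℂ)) (-π) = (fun x : ℝ => (g x : ℂ)) (-π + 2 * π) := by
        simp only [hpi2]
        rw [hga (-π) (fun h => absurd h.1 (lt_irrefl _)), hga π (fun h => absurd h.2 (lt_irrefl _))]
      set G : C(AddCircle (2 * π), ℂ) :=
        ⟨AddCircle.liftIco (2 * π) (-π) (fun x => (g x : ℂ)),
          AddCircle.liftIco_continuous hbd hgc.continuousOn⟩ with hGdef
      have h0 := hG G
      have hcong : (∫ x in (-π)..π, (b x : ℂ) * G (x : AddCircle (2 * π)))
          = ∫ x in (-π)..π, (b x : ℂ) * (g x : ℂ) := by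
        apply intervalIntegral.integral_congr_ae
        have hne : ∀ᵐ x : ℝ ∂volume, x ≠ π := by
          rw [ae_iff]
          simp only [ne_eq, not_not]
          exact Real.volume_singleton
        filter_upwards [hne] with x hx hxmem
        rw [Set.uIoc_of_le hpi] at hxmem
        have hxI : x ∈ Set.Ico (-π) (-π + 2 * π) :=
          ⟨hxmem.1.le, by rw [hpi2]; exact lt_of_le_of_ne hxmem.2 hx⟩
        show (b x : ℂ) * AddCircle.liftIco (2 * π) (-π) (fun x => (g x : ℂ)) ↑x = (b x : ℂ) * (g x : ℂ)
        rw [AddCircle.liftIco_coe_apply hxI]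
      rw [hcong] at h0
      have hreal : (∫ x in (-π)..π, b x * g x) = 0 := by
        have h2 : (∫ x in (-π)..π, ((b x * g x : ℝ) : ℂ)) = 0 := by
          rw [← h0]
          apply intervalIntegral.integral_congr
          intro x _
          push_cast
          ring
        rwa [intervalIntegral.integral_ofReal, Complex.ofReal_eq_zero] at h2
      have : (∫ x, g x • b x ∂(volume.restrict (Set.Icc (-π) π)))
          = ∫ x in (-π)..π, b x * g x := by
        rw [← MeasureTheory.setIntegral_congr_set MeasureTheory.Ioc_ae_eq_Icc,
          ← intervalIntegral.integral_of_le hpi]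
        apply intervalIntegral.integral_congr
        intro x _
        simp [mul_comm]
      rw [this, hreal]
  have hmem : ∀ᵐ x ∂(volume.restrict (Set.Icc (-π) π)), x ∈ Set.Icc (-π) π :=
    ae_restrict_mem measurableSet_Icc
  have hend : ∀ᵐ x ∂(volume.restrict (Set.Icc (-π) π)), x ∉ ({-π, π} : Set ℝ) := by
    rw [ae_iff]
    apply le_antisymm _ (zero_le)
    refine le_trans (measure_mono (fun x hx => ?_)) (le_trans (Measure.restrict_le_self _)
      (le_of_eq (((Set.finite_singleton (π:ℝ)).insert (-π)).measure_zero volume)))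
    simp only [Set.mem_setOf_eq, not_not] at hx
    exact hx
  filter_upwards [hIoo, hmem, hend] with x h1 h2 h3
  apply h1
  simp only [Set.mem_insert_iff, Set.mem_singleton_iff, not_or] at h3
  exact ⟨lt_of_le_of_ne h2.1 (Ne.symm h3.1), lt_of_le_of_ne h2.2 h3.2⟩

def qi : Quaternion ℝ := ⟨0, 1, 0, 0⟩

lemma eq_cont (c : ℝ) : Continuous (fun x : ℝ => eq (c * x)) := by
  have h : (fun x : ℝ => eq (c * x))
      = fun x => Real.cos (c * x) • (1 : Quaternion ℝ) + Real.sin (c * x) • qi := by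
    funext x; ext <;> simp <;> simp [eq, qi, Quaternion.re_one, Quaternion.imI_one, Quaternion.imJ_one, Quaternion.imK_one]
  rw [h]
  exact ((Real.continuous_cos.comp (continuous_const.mul continuous_id)).smul
    continuous_const).add ((Real.continuous_sin.comp (continuous_const.mul continuous_id)).smul continuous_const)

lemma star_eq (t : ℝ) : star (eq t) = eq (-t) := by
  ext <;> simp <;> simp [eq]

lemma abs_re_le (q : Quaternion ℝ) : |q.re| ≤ ‖q‖ := by
  have h : q.re^2 ≤ ‖q‖^2 := by
    have := Quaternion.normSq_eq_norm_mul_self q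
    rw [Quaternion.normSq_def'] at this
    nlinarith [sq_nonneg q.imI, sq_nonneg q.imJ, sq_nonneg q.imK]
  simpa [Real.sqrt_sq_eq_abs, Real.sqrt_sq (norm_nonneg q)] using Real.sqrt_le_sqrt h

lemma abs_imI_le (q : Quaternion ℝ) : |q.imI| ≤ ‖q‖ := by
  have h : q.imI^2 ≤ ‖q‖^2 := by
    have := Quaternion.normSq_eq_norm_mul_self q
    rw [Quaternion.normSq_def'] at this
    nlinarith [sq_nonneg q.re, sq_nonneg q.imJ, sq_nonneg q.imK]
  simpa [Real.sqrt_sq_eq_abs, Real.sqrt_sq (norm_nonneg q)] using Real.sqrt_le_sqrt h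

noncomputable def reCLM : Quaternion ℝ →L[ℝ] ℝ :=
  LinearMap.mkContinuous (QuaternionAlgebra.reₗ (-1 : ℝ) (0 : ℝ) (-1 : ℝ)) 1 (fun q => by rw [one_mul, Real.norm_eq_abs]; exact abs_re_le q)
noncomputable def imICLM : Quaternion ℝ →L[ℝ] ℝ :=
  LinearMap.mkContinuous (QuaternionAlgebra.imIₗ (-1 : ℝ) (0 : ℝ) (-1 : ℝ)) 1 (fun q => by rw [one_mul, Real.norm_eq_abs]; exact abs_imI_le q)
noncomputable def starCLM : Quaternion ℝ →L[ℝ] Quaternion ℝ :=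
  LinearMap.mkContinuous
    { toFun := star
      map_add' := star_add
      map_smul' := fun r q => by ext <;> simp }
    1 (fun q => by simp)

lemma quat_coeffs
    (f : ℝ → Quaternion ℝ)
    (hf : IntervalIntegrable f volume (-π) π)
    (t : ℕ → Quaternion ℝ)
    (ht : ∀ s : ℕ, t s = (2 * π)⁻¹ • ∫ x in (-π)..π, f x * eq (-(s * x)))
    (hherm : ∀ s : ℕ, star (t s) = (2 * π)⁻¹ • ∫ x in (-π)..π, f x * eq (s * x)) (s : ℕ) :
    (∫ x in (-π)..π, (f x).imI * Real.sin (s * x)) = 0 ∧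
    (∫ x in (-π)..π, (f x).imI * Real.cos (s * x)) = 0 := by
  have h2π : (2 * π)⁻¹ ≠ 0 := by positivity
  -- integrability facts
  have hint1 : IntervalIntegrable (fun x => f x * eq (-(s * x))) volume (-π) π :=
    hf.mul_continuousOn (by
      have := eq_cont (-(s:ℝ))
      simpa [neg_mul] using this.continuousOn)
  have hstarf : IntervalIntegrable (fun x => star (f x)) volume (-π) π :=
    ⟨starCLM.integrable_comp hf.1, starCLM.integrable_comp hf.2⟩
  have hint2 : IntervalIntegrable (fun x => eq ((s:ℝ) * x) * star (f x)) volume (-π) π :=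
    hstarf.continuousOn_mul (eq_cont (s:ℝ)).continuousOn
  have hint3 : IntervalIntegrable (fun x => f x * eq ((s:ℝ) * x)) volume (-π) π :=
    hf.mul_continuousOn (eq_cont (s:ℝ)).continuousOn
  -- the key identity
  have hstar_comm : star (∫ x in (-π)..π, f x * eq (-(s * x)))
      = ∫ x in (-π)..π, star (f x * eq (-(s * x))) :=
    (starCLM.intervalIntegral_comp_comm hint1).symm
  have hkey : (∫ x in (-π)..π, eq ((s:ℝ) * x) * star (f x)) = ∫ x in (-π)..π, f x * eq ((s:ℝ) * x) := by
    have h1 : star (t s) = (2 * π)⁻¹ • ∫ x in (-π)..π, eq ((s:ℝ) * x) * star (f x) := by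
      have hsm : ∀ (r : ℝ) (q : Quaternion ℝ), star (r • q) = r • star q := fun r q => by
        ext <;> simp
      rw [ht s, hsm, hstar_comm]
      congr 1
      apply intervalIntegral.integral_congr
      intro x _
      show star (f x * eq (-(s * x))) = eq ((s:ℝ) * x) * star (f x)
      rw [star_mul, star_eq, neg_neg]
    have h2 := (h1.symm.trans (hherm s))
    exact smul_right_injective _ h2π h2
  have hccont : Continuous (fun x : ℝ => Real.cos ((s:ℝ) * x)) :=
    Real.continuous_cos.comp (continuous_const.mul continuous_id)
  have hscont : Continuous (fun x : ℝ => Real.sin ((s:ℝ) * x)) :=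
    Real.continuous_sin.comp (continuous_const.mul continuous_id)
  have hA : IntervalIntegrable (fun x => (f x).re) volume (-π) π :=
    ⟨reCLM.integrable_comp hf.1, reCLM.integrable_comp hf.2⟩
  have hB : IntervalIntegrable (fun x => (f x).imI) volume (-π) π :=
    ⟨imICLM.integrable_comp hf.1, imICLM.integrable_comp hf.2⟩
  have hAc : IntervalIntegrable (fun x => (f x).re * Real.cos ((s:ℝ) * x)) volume (-π) π :=
    hA.mul_continuousOn hccont.continuousOn
  have hAs : IntervalIntegrable (fun x => (f x).re * Real.sin ((s:ℝ) * x)) volume (-π) π :=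
    hA.mul_continuousOn hscont.continuousOn
  have hBc : IntervalIntegrable (fun x => (f x).imI * Real.cos ((s:ℝ) * x)) volume (-π) π :=
    hB.mul_continuousOn hccont.continuousOn
  have hBs : IntervalIntegrable (fun x => (f x).imI * Real.sin ((s:ℝ) * x)) volume (-π) π :=
    hB.mul_continuousOn hscont.continuousOn
  constructor
  · have h := congrArg reCLM hkey
    rw [← reCLM.intervalIntegral_comp_comm hint2, ← reCLM.intervalIntegral_comp_comm hint3] at h
    have e1 : (∫ x in (-π)..π, reCLM (eq ((s:ℝ) * x) * star (f x)))
        = ∫ x in (-π)..π, ((f x).re * Real.cos ((s:ℝ) * x) + (f x).imI * Real.sin ((s:ℝ) * x)) := by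
      apply intervalIntegral.integral_congr
      intro x _
      show (eq ((s:ℝ) * x) * star (f x)).re = _
      simp [Quaternion.re_mul] <;> simp [eq]
      try ring
    have e2 : (∫ x in (-π)..π, reCLM (f x * eq ((s:ℝ) * x)))
        = ∫ x in (-π)..π, ((f x).re * Real.cos ((s:ℝ) * x) - (f x).imI * Real.sin ((s:ℝ) * x)) := by
      apply intervalIntegral.integral_congr
      intro x _
      show (f x * eq ((s:ℝ) * x)).re = _
      simp [Quaternion.re_mul] <;> simp [eq]
    rw [e1, e2, intervalIntegral.integral_add hAc hBs, intervalIntegral.integral_sub hAc hBs] at h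
    linarith
  · have h := congrArg imICLM hkey
    rw [← imICLM.intervalIntegral_comp_comm hint2, ← imICLM.intervalIntegral_comp_comm hint3] at h
    have e1 : (∫ x in (-π)..π, imICLM (eq ((s:ℝ) * x) * star (f x)))
        = ∫ x in (-π)..π, ((f x).re * Real.sin ((s:ℝ) * x) - (f x).imI * Real.cos ((s:ℝ) * x)) := by
      apply intervalIntegral.integral_congr
      intro x _
      show (eq ((s:ℝ) * x) * star (f x)).imI = _
      simp [Quaternion.imI_mul] <;> simp [eq]
      try ring
    have e2 : (∫ x in (-π)..π, imICLM (f x * eq ((s:ℝ) * x)))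
        = ∫ x in (-π)..π, ((f x).re * Real.sin ((s:ℝ) * x) + (f x).imI * Real.cos ((s:ℝ) * x)) := by
      apply intervalIntegral.integral_congr
      intro x _
      show (f x * eq ((s:ℝ) * x)).imI = _
      simp [Quaternion.imI_mul] <;> simp [eq]
      try ring
    rw [e1, e2, intervalIntegral.integral_sub hAs hBc, intervalIntegral.integral_add hAs hBc] at h
    linarith

theorem phi1_real_ae_of_hermitian_generating
    (f : ℝ → Quaternion ℝ)
    (hf : IntervalIntegrable f volume (-π) π)
    (t : ℕ → Quaternion ℝ)
    (ht : ∀ s : ℕ, t s = (2 * π)⁻¹ • ∫ x in (-π)..π, f x * eq (-(s * x)))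
    (hherm : ∀ s : ℕ, star (t s) = (2 * π)⁻¹ • ∫ x in (-π)..π, f x * eq (s * x)) :
    ∀ᵐ x ∂(volume.restrict (Set.Icc (-π) π)), ((phi1 (f x)).im = 0) := by
  have hb : IntervalIntegrable (fun x => (f x).imI) volume (-π) π :=
    ⟨imICLM.integrable_comp hf.1, imICLM.integrable_comp hf.2⟩
  have key := fourier_unique (fun x => (f x).imI) hb
    (fun s => (quat_coeffs f hf t ht hherm s).2)
    (fun s => (quat_coeffs f hf t ht hherm s).1)
  filter_upwards [key] with x hx
  show (phi1 (f x)).im = 0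
  exact hx
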